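/- For a strictly consistent loss L for a functional T and proxy Ỹ₁ whose conditional distribution given 𝓕 has the same functional value as that of Y₁, i.e., T(F_{Y₁|𝓕}(ω,·)) = T(F_{Ỹ₁|𝓕}(ω,·)) for a.e. ω, the true conditional functional conditionally dominates any 𝓕-measurable forecast Z when evaluated against the proxy: E[L(T(F_{Y₁|𝓕}), Ỹ₁) | 𝓕] ≤ E[L(Z, Ỹ₁) | 𝓕] a.s., with equality a.s. if and only if Z = T(F_{Y₁|𝓕}) a.s. -/

import Mathlib

open MeasureTheory Set Filter Topology Function
open scoped ENNReal

namespace Stmt17Aux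

lemma exists_le_add_of_iSup {x : ℕ → ℝ≥0∞} {V δ : ℝ≥0∞} (hV : V ≠ ⊤) (hδ : 0 < δ)
    (h : V = ⨆ j, x j) : ∃ j, V ≤ x j + δ := by
  rcases le_or_gt V δ with h' | h'
  · exact ⟨0, h'.trans (le_add_self)⟩
  · have hVδ : V - δ < V := ENNReal.sub_lt_self hV (lt_of_le_of_lt zero_le h').ne' hδ.ne'
    obtain ⟨j, hj⟩ := lt_iSup_iff.mp (h ▸ hVδ : V - δ < ⨆ j, x j)
    refine ⟨j, ?_⟩
    have := add_le_add_left hj.le δ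
    rwa [tsub_add_cancel_of_le h'.le] at this

/-- bounded-prefix sets -/
def S (k : ℕ → ℕ) (n : ℕ) : Set (ℕ → ℕ) := {z | ∀ i < n, z i ≤ k i}

lemma S_zero (k : ℕ → ℕ) : S k 0 = univ := by
  ext z; simp [S]

lemma S_antitone_in_prefix {k k' : ℕ → ℕ} {n m : ℕ} (hnm : n ≤ m)
    (hk : ∀ i < n, k i = k' i) : S k' m ⊆ S k n := by
  intro z hz i hi
  rw [hk i hi]; exact hz i (lt_of_lt_of_le hi hnm)

lemma step_exists {X : Type*} [TopologicalSpace X]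
    [MeasurableSpace X]
    (ν : Measure X) [IsFiniteMeasure ν] (f : (ℕ → ℕ) → X) :
    ∀ (n : ℕ) (kk : ℕ → ℕ) (δ : ℝ≥0∞), 0 < δ →
      ∃ j : ℕ, ν (f '' S kk n) ≤ ν (f '' S (update kk n j) (n+1)) + δ := by
  intro n kk δ hδ
  have hmono : Monotone fun j : ℕ => f '' S (update kk n j) (n+1) := by
    intro a b hab
    refine image_mono fun z hz i hi => ?_
    rcases Nat.lt_or_ge i n with h | h
    · have h1 := hz i hi
      rw [update_of_ne h.ne] at h1 ⊢; exact h1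
    · have : i = n := le_antisymm (Nat.lt_succ_iff.mp hi) h
      subst this
      have h1 := hz i (Nat.lt_succ_self _)
      rw [update_self] at h1 ⊢
      exact le_trans h1 hab
  have hU0 : (⋃ j : ℕ, S (update kk n j) (n+1)) = S kk n := by
    apply Subset.antisymm
    · refine iUnion_subset fun j => ?_
      exact S_antitone_in_prefix (Nat.le_succ n) (fun i hi => (update_of_ne hi.ne _ _).symm)
    · intro z hz
      refine mem_iUnion.mpr ⟨z n, fun i hi => ?_⟩
      rcases Nat.lt_or_ge i n with h | h
      · rw [update_of_ne h.ne]; exact hz i h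
      · have : i = n := le_antisymm (Nat.lt_succ_iff.mp hi) h
        subst this; rw [update_self]
  have hU : (⋃ j : ℕ, f '' S (update kk n j) (n+1)) = f '' S kk n := by
    rw [← image_iUnion, hU0]
  have hsup : ν (f '' S kk n) = ⨆ j : ℕ, ν (f '' S (update kk n j) (n+1)) := by
    rw [← hU]
    exact hmono.measure_iUnion
  exact exists_le_add_of_iSup (measure_ne_top ν _) hδ hsup

lemma S_congr {k k' : ℕ → ℕ} {n : ℕ} (h : ∀ i < n, k i = k' i) : S k n = S k' n := by
  ext z
  constructor <;> intro hz i hi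
  · rw [← h i hi]; exact hz i hi
  · rw [h i hi]; exact hz i hi

lemma S_anti (k : ℕ → ℕ) : Antitone (S k) := by
  intro n m hnm z hz i hi
  exact hz i (lt_of_lt_of_le hi hnm)

/-- Choquet capacitability (inner compact approximation) for analytic sets. -/
theorem analyticSet_exists_isCompact_subset {X : Type*} [TopologicalSpace X] [PolishSpace X]
    [MeasurableSpace X] [BorelSpace X]
    {A : Set X} (hA : AnalyticSet A) (ν : Measure X) [IsFiniteMeasure ν]
    {ε : ℝ≥0∞} (hε : 0 < ε) :
    ∃ K : Set X, IsCompact K ∧ K ⊆ A ∧ ν A ≤ ν K + ε := by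
  letI := TopologicalSpace.upgradeIsCompletelyMetrizable X
  rw [AnalyticSet_def] at hA
  rcases hA with rfl | ⟨f, hf, hfr⟩
  · exact ⟨∅, isCompact_empty, Subset.rfl, by simp⟩
  -- small epsilons
  set εn : ℕ → ℝ≥0∞ := fun n => ε / 2 ^ (n + 1) with hεndef
  have hεnpos : ∀ n, 0 < εn n := fun n =>
    ENNReal.div_pos hε.ne' (by simp [ENNReal.pow_ne_top])
  have hεnsum : ∀ n, (∑ i ∈ Finset.range n, εn i) ≤ ε := by
    intro n
    have h1 : ∀ i, εn i = (ε / 2) * (2⁻¹ : ℝ≥0∞) ^ i := by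
      intro i
      rw [hεndef]
      simp only []
      rw [div_eq_mul_inv, div_eq_mul_inv, ← ENNReal.inv_pow, pow_succ, mul_comm ((2 : ℝ≥0∞)^i),
        ENNReal.mul_inv (by simp) (by simp), mul_assoc, ENNReal.inv_pow]
    calc (∑ i ∈ Finset.range n, εn i) ≤ ∑' i, εn i := ENNReal.sum_le_tsum _
    _ = (ε / 2) * ∑' i, (2⁻¹ : ℝ≥0∞) ^ i := by
        simp_rw [h1]; exact ENNReal.tsum_mul_left
    _ = (ε / 2) * 2 := by rw [ENNReal.tsum_geometric, ENNReal.one_sub_inv_two, inv_inv]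
    _ = ε := by
        rw [div_eq_mul_inv, mul_assoc, ENNReal.inv_mul_cancel (by simp) (by simp), mul_one]
  -- the recursively chosen bounds
  set KK : ℕ → (ℕ → ℕ) := fun n => Nat.rec (motive := fun _ => ℕ → ℕ) (fun _ => 0)
    (fun n kk => update kk n
      (Classical.choose (step_exists ν f n kk (εn n) (hεnpos n)))) n with hKKdef
  have hKKsucc : ∀ n, KK (n + 1) = update (KK n) n
      (Classical.choose (step_exists ν f n (KK n) (εn n) (hεnpos n))) := fun n => rfl
  have hInv : ∀ n, ν A ≤ ν (f '' S (KK n) n) + ∑ i ∈ Finset.range n, εn i := by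
    intro n
    induction n with
    | zero =>
      simp only [Finset.range_zero, Finset.sum_empty, add_zero, S_zero, image_univ, hfr, le_refl]
    | succ n ih =>
      have hspec := Classical.choose_spec (step_exists ν f n (KK n) (εn n) (hεnpos n))
      rw [Finset.sum_range_succ, ← hKKsucc n] at *
      calc ν A ≤ ν (f '' S (KK n) n) + ∑ i ∈ Finset.range n, εn i := ih
      _ ≤ (ν (f '' S (KK (n+1)) (n+1)) + εn n) + ∑ i ∈ Finset.range n, εn i := by
          exact add_le_add_left hspec _
      _ = ν (f '' S (KK (n+1)) (n+1)) + (∑ i ∈ Finset.range n, εn i + εn n) := by ring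
  -- stabilization
  have hstab : ∀ i n, i < n → KK n i = KK (i + 1) i := by
    intro i n hin
    induction n with
    | zero => omega
    | succ n ih =>
      rcases Nat.lt_or_ge i n with h | h
      · rw [hKKsucc n, update_of_ne h.ne, ih h]
      · have : i = n := le_antisymm (Nat.lt_succ_iff.mp hin) h
        subst this
        rfl
  set k : ℕ → ℕ := fun i => KK (i + 1) i with hkdef
  have hSk : ∀ n, S k n = S (KK n) n := by
    intro n
    exact S_congr fun i hi => (hstab i n hi).symm
  have hInv' : ∀ n, ν A ≤ ν (f '' S k n) + ε := by
    intro n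
    rw [hSk n]
    exact (hInv n).trans (add_le_add_right (hεnsum n) _)
  -- the compact set
  set Sig : Set (ℕ → ℕ) := Set.pi univ (fun i => Iic (k i)) with hSigdef
  have hSigmem : ∀ z, z ∈ Sig ↔ ∀ i, z i ≤ k i := by
    intro z; simp [hSigdef, Set.mem_pi, Pi.le_def]
  have hSigc : IsCompact Sig :=
    isCompact_univ_pi fun i => (finite_Iic (k i)).isCompact
  have hSigcl : IsClosed Sig :=
    isClosed_set_pi fun i _ => isClosed_Iic
  -- main inclusion
  have hincl : (⋂ n, closure (f '' S k n)) ⊆ f '' Sig := by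
    intro x hx
    simp only [mem_iInter] at hx
    -- the compact decreasing family
    set C : ℕ → Set (ℕ → ℕ) :=
      fun n => {z | z ∈ Sig ∧ x ∈ closure (f '' {w | ∀ i < n, w i = z i})} with hCdef
    -- basic cylinders are closed
    have cyl_closed : ∀ (n : ℕ) (z : ℕ → ℕ), IsClosed {w : ℕ → ℕ | ∀ i < n, w i = z i} := by
      intro n z
      have : {w : ℕ → ℕ | ∀ i < n, w i = z i} = ⋂ (i : ℕ) (_ : i < n), (fun w => w i) ⁻¹' {z i} := by
        ext w; simp
      rw [this]
      exact isClosed_iInter fun i => isClosed_iInter fun _ =>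
        (isClosed_discrete _).preimage (continuous_apply i)
    -- each C n is nonempty
    have hCne : ∀ n, (C n).Nonempty := by
      intro n
      have hxn := hx n
      -- decompose S k n as finite union of cylinders
      have hdec : S k n = ⋃ g : (i : Fin n) → Fin (k i.1 + 1),
          {w : ℕ → ℕ | ∀ i : Fin n, w i.1 = (g i).1} := by
        apply Subset.antisymm
        · intro w hw
          exact mem_iUnion.mpr ⟨fun i => ⟨w i.1, Nat.lt_succ_of_le (hw i.1 i.2)⟩, fun i => rfl⟩
        · intro w hw
          obtain ⟨g, hg⟩ := mem_iUnion.mp hw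
          intro i hi
          rw [hg ⟨i, hi⟩]
          exact Nat.lt_succ_iff.mp (g ⟨i, hi⟩).2
      rw [hdec, image_iUnion, closure_iUnion_of_finite] at hxn
      obtain ⟨g, hg⟩ := mem_iUnion.mp hxn
      refine ⟨fun i => if h : i < n then (g ⟨i, h⟩).1 else 0, ?_, ?_⟩
      · rw [hSigmem]
        intro i
        by_cases h : i < n
        · simp only [dif_pos h]
          exact Nat.lt_succ_iff.mp (g ⟨i, h⟩).2
        · simp only [dif_neg h]
          exact Nat.zero_le _
      · have : {w : ℕ → ℕ | ∀ i < n, w i = if h : i < n then (g ⟨i, h⟩).1 else 0}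
            = {w : ℕ → ℕ | ∀ i : Fin n, w i.1 = (g i).1} := by
          ext w
          constructor
          · intro hw i
            have := hw i.1 i.2
            rwa [dif_pos i.2] at this
          · intro hw i hi
            rw [dif_pos hi]
            exact hw ⟨i, hi⟩
        rw [this]
        exact hg
    -- each C n is closed
    have hCcl : ∀ n, IsClosed (C n) := by
      intro n
      have : C n = Sig ∩ ⋃ (g : (i : Fin n) → Fin (k i.1 + 1))
          (_ : x ∈ closure (f '' {w : ℕ → ℕ | ∀ i : Fin n, w i.1 = (g i).1})),
          {z : ℕ → ℕ | ∀ i : Fin n, z i.1 = (g i).1} := by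
        ext z
        constructor
        · rintro ⟨hzS, hzx⟩
          refine ⟨hzS, ?_⟩
          have hb : ∀ i : Fin n, z i.1 < k i.1 + 1 :=
            fun i => Nat.lt_succ_of_le ((hSigmem z).mp hzS i.1)
          refine mem_iUnion.mpr ⟨fun i => ⟨z i.1, hb i⟩, ?_⟩
          have hcyl : {w : ℕ → ℕ | ∀ i : Fin n, w i.1 = z i.1}
              = {w : ℕ → ℕ | ∀ i < n, w i = z i} := by
            ext w
            exact ⟨fun h i hi => h ⟨i, hi⟩, fun h i => h i.1 i.2⟩
          exact mem_iUnion.mpr ⟨by rw [hcyl]; exact hzx, fun i => rfl⟩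
        · rintro ⟨hzS, hzu⟩
          obtain ⟨g, hg⟩ := mem_iUnion.mp hzu
          obtain ⟨hgx, hzg⟩ := mem_iUnion.mp hg
          refine ⟨hzS, ?_⟩
          have hcyl : {w : ℕ → ℕ | ∀ i < n, w i = z i}
              = {w : ℕ → ℕ | ∀ i : Fin n, w i.1 = (g i).1} := by
            ext w
            constructor
            · intro h i
              rw [h i.1 i.2, hzg i]
            · intro h i hi
              rw [h ⟨i, hi⟩, ← hzg ⟨i, hi⟩]
          rw [hcyl]
          exact hgx
      rw [this]
      refine hSigcl.inter ?_
      refine isClosed_iUnion_of_finite fun g => isClosed_iUnion_of_finite fun _ => ?_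
      have : {z : ℕ → ℕ | ∀ i : Fin n, z i.1 = (g i).1}
          = ⋂ i : Fin n, (fun z : ℕ → ℕ => z i.1) ⁻¹' {(g i).1} := by
        ext z; simp
      rw [this]
      exact isClosed_iInter fun i => (isClosed_discrete _).preimage (continuous_apply i.1)
    -- C is decreasing
    have hCanti : ∀ n, C (n + 1) ⊆ C n := by
      intro n z hz
      refine ⟨hz.1, closure_mono (image_mono ?_) hz.2⟩
      intro w hw i hi
      exact hw i (Nat.lt_succ_of_lt hi)
    -- Cantor intersection
    obtain ⟨z, hz⟩ := IsCompact.nonempty_iInter_of_sequence_nonempty_isCompact_isClosed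
      C hCanti hCne (hSigc.of_isClosed_subset (hCcl 0) (fun z hz => hz.1)) hCcl
    simp only [mem_iInter] at hz
    have hzS : z ∈ Sig := (hz 0).1
    -- f z = x
    have hdist : ∀ δ : ℝ, 0 < δ → dist x (f z) ≤ δ := by
      intro δ hδ
      have hball : f ⁻¹' Metric.ball (f z) δ ∈ nhds z :=
        hf.continuousAt (Metric.isOpen_ball.mem_nhds (Metric.mem_ball_self hδ))
      obtain ⟨U, hUsub, hUopen, hzU⟩ := mem_nhds_iff.mp hball
      obtain ⟨I, u, hIu, hIsub⟩ := (isOpen_pi_iff.mp hUopen) z hzU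
      set n := (I.sup id) + 1 with hndef
      have hcylsub : {w : ℕ → ℕ | ∀ i < n, w i = z i} ⊆ U := by
        intro w hw
        refine hIsub ?_
        intro i hi
        have : i < n := Nat.lt_succ_of_le (Finset.le_sup (f := id) hi)
        rw [mem_setOf_eq] at hw
        rw [hw i this]
        exact (hIu i hi).2
      have hxcl : x ∈ closure (f '' {w : ℕ → ℕ | ∀ i < n, w i = z i}) := (hz n).2
      have : closure (f '' {w : ℕ → ℕ | ∀ i < n, w i = z i})
          ⊆ Metric.closedBall (f z) δ := by
        refine (closure_mono ?_).trans Metric.closure_ball_subset_closedBall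
        intro y hy
        obtain ⟨w, hw, rfl⟩ := hy
        exact hUsub (hcylsub hw)
      exact Metric.mem_closedBall.mp (this hxcl)
    have : dist x (f z) ≤ 0 := le_of_forall_pos_le_add (by simpa using fun δ hδ => hdist δ hδ)
    have hxz : x = f z := by
      rwa [← dist_le_zero]
    exact ⟨z, hzS, hxz.symm⟩
  -- measure estimate
  refine ⟨f '' Sig, hSigc.image hf, by rw [← hfr]; exact image_subset_range f Sig, ?_⟩
  have hclanti : Antitone fun n => closure (f '' S k n) :=
    fun n m hnm => closure_mono (image_mono (S_anti k hnm))
  have hiInter : ν (⋂ n, closure (f '' S k n)) = ⨅ n, ν (closure (f '' S k n)) :=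
    hclanti.directed_ge.measure_iInter
      (fun n => isClosed_closure.measurableSet.nullMeasurableSet)
      ⟨0, measure_ne_top ν _⟩
  have h1 : ν A - ε ≤ ν (⋂ n, closure (f '' S k n)) := by
    rw [hiInter]
    refine le_iInf fun n => ?_
    rw [tsub_le_iff_right]
    exact (hInv' n).trans (add_le_add_left (measure_mono subset_closure) ε)
  calc ν A ≤ (ν A - ε) + ε := le_tsub_add
  _ ≤ ν (⋂ n, closure (f '' S k n)) + ε := add_le_add_left h1 ε
  _ ≤ ν (f '' Sig) + ε := add_le_add_left (measure_mono hincl) ε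

/-- Analytic sets are null measurable: sandwich between Borel sets. -/
theorem analyticSet_exists_sandwich {X : Type*} [TopologicalSpace X] [PolishSpace X]
    [MeasurableSpace X] [BorelSpace X]
    {A : Set X} (hA : AnalyticSet A) (ν : Measure X) [IsFiniteMeasure ν] :
    ∃ S₁ S₂ : Set X, MeasurableSet S₁ ∧ MeasurableSet S₂ ∧
      S₁ ⊆ A ∧ A ⊆ S₂ ∧ ν (S₂ \ S₁) = 0 := by
  have hK : ∀ n : ℕ, ∃ K : Set X, IsCompact K ∧ K ⊆ A ∧ ν A ≤ ν K + 1 / (n + 1) := by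
    intro n
    exact analyticSet_exists_isCompact_subset hA ν
      (ENNReal.div_pos one_ne_zero (by simp))
  choose K hKc hKA hKν using hK
  have hUmeas : MeasurableSet (⋃ n, K n) :=
    MeasurableSet.iUnion fun n => (hKc n).isClosed.measurableSet
  have hUsub : (⋃ n, K n) ⊆ A := iUnion_subset hKA
  refine ⟨⋃ n, K n, toMeasurable ν A, hUmeas, measurableSet_toMeasurable ν A,
    hUsub, subset_toMeasurable ν A, ?_⟩
  have h1 : ν A ≤ ν (⋃ n, K n) := by
    refine ENNReal.le_of_forall_pos_le_add fun δ hδ _ => ?_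
    obtain ⟨n, hn⟩ := ENNReal.exists_inv_nat_lt (ENNReal.coe_ne_zero.mpr hδ.ne')
    calc ν A ≤ ν (K n) + 1 / (n + 1) := hKν n
    _ ≤ ν (⋃ n, K n) + δ := by
        refine add_le_add (measure_mono (subset_iUnion K n)) ?_
        rw [one_div]
        exact (le_trans (ENNReal.inv_le_inv.mpr (by exact_mod_cast Nat.le_succ n)) hn.le)
  have h2 : ν (toMeasurable ν A \ ⋃ n, K n) = ν (toMeasurable ν A) - ν (⋃ n, K n) :=
    measure_diff (hUsub.trans (subset_toMeasurable ν A)) hUmeas.nullMeasurableSet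
      (measure_ne_top ν _)
  rw [h2, measure_toMeasurable]
  exact tsub_eq_zero_of_le h1

/-- Every set measurable for `m.prod (borel ℝ)` factors through a countably generated
part of `m`, i.e. through a measurable map to `ℕ → ℕ`. -/
theorem exists_factorization {Ω : Type*} (m : MeasurableSpace Ω)
    {D : Set (Ω × ℝ)} (hD : MeasurableSet[m.prod (borel ℝ)] D) :
    ∃ π : Ω → ℕ → ℕ, Measurable[m] π ∧
      ∃ D' : Set ((ℕ → ℕ) × ℝ), MeasurableSet D' ∧ D = Prod.map π id ⁻¹' D' := by
  set good : Set (Ω × ℝ) → Prop := fun E => ∃ π : Ω → ℕ → ℕ, Measurable[m] π ∧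
      ∃ E' : Set ((ℕ → ℕ) × ℝ), MeasurableSet E' ∧ E = Prod.map π id ⁻¹' E' with hgood
  have hempty : good ∅ := ⟨fun _ _ => 0, measurable_const, ∅, MeasurableSet.empty, (Set.preimage_empty).symm⟩
  have hcompl : ∀ E, good E → good Eᶜ := by
    rintro E ⟨π, hπ, E', hE', rfl⟩
    exact ⟨π, hπ, E'ᶜ, hE'.compl, by rw [Set.preimage_compl]⟩
  have hunion : ∀ E : ℕ → Set (Ω × ℝ), (∀ n, good (E n)) → good (⋃ n, E n) := by
    intro E hE
    choose πs hπs E' hE' hEeq using hE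
    set π : Ω → ℕ → ℕ := fun ω j => πs (Nat.unpair j).1 ω (Nat.unpair j).2 with hπdef
    have hπ : Measurable[m] π := by
      refine measurable_pi_lambda _ fun j => ?_
      exact (measurable_pi_apply _).comp (hπs _)
    set ρ : ℕ → (ℕ → ℕ) → ℕ → ℕ := fun n v i => v (Nat.pair n i) with hρdef
    have hρ : ∀ n, Measurable (ρ n) := fun n =>
      measurable_pi_lambda _ fun i => measurable_pi_apply _
    have hρπ : ∀ n ω, ρ n (π ω) = πs n ω := by
      intro n ω
      funext i
      simp [hρdef, hπdef, Nat.unpair_pair]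
    refine ⟨π, hπ, ⋃ n, Prod.map (ρ n) id ⁻¹' E' n,
      MeasurableSet.iUnion fun n => ((hρ n).prodMap measurable_id) (hE' n), ?_⟩
    rw [Set.preimage_iUnion]
    refine iUnion_congr fun n => ?_
    rw [hEeq n, ← Set.preimage_comp]
    ext p
    have hcomp : (Prod.map (ρ n) id ∘ Prod.map π id) p = Prod.map (πs n) id p := by
      cases p with | mk a b => simp [Prod.map, hρπ]
    rw [Set.mem_preimage, Set.mem_preimage, hcomp]
  -- the collection of good sets is a σ-algebra
  set mc : MeasurableSpace (Ω × ℝ) := {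
    MeasurableSet' := good
    measurableSet_empty := hempty
    measurableSet_compl := hcompl
    measurableSet_iUnion := hunion } with hmc
  have hle : m.prod (borel ℝ) ≤ mc := by
    rw [MeasurableSpace.prod]
    refine sup_le ?_ ?_
    · rintro s ⟨A, hA, rfl⟩
      refine ⟨fun ω _ => A.indicator (fun _ => (1 : ℕ)) ω,
        measurable_pi_lambda _ fun _ => (measurable_const.indicator hA),
        ((fun v : ℕ → ℕ => v 0) ⁻¹' {1}) ×ˢ (univ : Set ℝ), ?_, ?_⟩
      · exact ((measurable_pi_apply 0) (measurableSet_singleton 1)).prod MeasurableSet.univ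
      · ext p
        by_cases hp : p.1 ∈ A <;>
          simp [Prod.map, hp]
    · rintro s ⟨B, hB, rfl⟩
      refine ⟨fun _ _ => 0, measurable_const, univ ×ˢ B, MeasurableSet.univ.prod hB, ?_⟩
      ext p
      simp [Prod.map]
  exact hle D hD

/-- Measurable projection theorem (up to null sets), for the product with `ℝ`,
with an abstract measurable space on the first factor. -/
theorem exists_proj_sandwich {Ω : Type*} [mΩ : MeasurableSpace Ω] (μ : Measure Ω)
    [IsFiniteMeasure μ] (m : MeasurableSpace Ω) (hm : m ≤ mΩ)
    {D : Set (Ω × ℝ)} (hD : MeasurableSet[m.prod (borel ℝ)] D) :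
    ∃ S₁ S₂ : Set Ω, MeasurableSet[m] S₁ ∧ MeasurableSet[m] S₂ ∧
      S₁ ⊆ Prod.fst '' D ∧ Prod.fst '' D ⊆ S₂ ∧ μ (S₂ \ S₁) = 0 := by
  obtain ⟨π, hπ, D', hD', rfl⟩ := exists_factorization m hD
  have hπΩ : Measurable[mΩ] π := hπ.mono hm le_rfl
  set ν : Measure (ℕ → ℕ) := @Measure.map Ω (ℕ → ℕ) mΩ _ π μ with hν
  have hmap : ∀ s : Set (ℕ → ℕ), MeasurableSet s → ν s = μ (π ⁻¹' s) := fun s hs =>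
    @Measure.map_apply Ω (ℕ → ℕ) mΩ _ μ π hπΩ s hs
  haveI : IsFiniteMeasure ν := by
    constructor
    rw [hmap univ MeasurableSet.univ]
    exact measure_lt_top μ _
  have hA' : AnalyticSet (Prod.fst '' D') := hD'.analyticSet_image measurable_fst
  obtain ⟨T₁, T₂, hT₁, hT₂, hT₁sub, hT₂sub, hTnull⟩ := analyticSet_exists_sandwich hA' ν
  have hproj : Prod.fst '' (Prod.map π id ⁻¹' D') = π ⁻¹' (Prod.fst '' D') := by
    ext ω
    constructor
    · rintro ⟨p, hp, rfl⟩
      exact ⟨(π p.1, p.2), hp, rfl⟩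
    · rintro ⟨q, hq, hq2⟩
      exact ⟨(ω, q.2), by simpa [Prod.map, hq2] using (show (π ω, q.2) ∈ D' by
        rwa [show (π ω, q.2) = q from Prod.ext hq2.symm rfl]), rfl⟩
  refine ⟨π ⁻¹' T₁, π ⁻¹' T₂, hπ hT₁, hπ hT₂, ?_, ?_, ?_⟩
  · rw [hproj]; exact preimage_mono hT₁sub
  · rw [hproj]; exact preimage_mono hT₂sub
  · rw [← Set.preimage_diff, ← Measure.map_apply hπΩ (hT₂.diff hT₁)]
    exact hTnull

end Stmt17Aux

open Stmt17Aux in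
/-- For a strictly consistent loss for a functional T and a proxy whose conditional
distribution has the same functional value, the true conditional functional conditionally
dominates any forecast when evaluated against the proxy, with equality iff the forecast
equals the true conditional functional a.s. -/
theorem stmt_17 {Ω : Type*} (m : MeasurableSpace Ω) {mΩ : MeasurableSpace Ω} (μ : Measure Ω) [IsProbabilityMeasure μ]
    (hm : m ≤ mΩ)
    (Θ : Set (Measure ℝ)) (T : Measure ℝ → ℝ)
    (L : ℝ → ℝ → ℝ) (hLmeas : Measurable (Function.uncurry L)) (hLnonneg : ∀ x y, 0 ≤ L x y)
    -- strict consistency of L for T relative to Θ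
    (hconsistent : ∀ F ∈ Θ, IsProbabilityMeasure F → ∀ x : ℝ,
      (∫ y, L (T F) y ∂F ≤ ∫ y, L x y ∂F) ∧
      (∫ y, L (T F) y ∂F = ∫ y, L x y ∂F → x = T F))
    (Y₁ Yp : Ω → ℝ) (hY₁ : Measurable Y₁) (hYp : Measurable Yp)
    -- regular conditional distributions of Y₁ and Yp given m
    (κY κp : @ProbabilityTheory.Kernel Ω ℝ m _)
    [ProbabilityTheory.IsMarkovKernel κY] [ProbabilityTheory.IsMarkovKernel κp]
    (hκY : ∀ᵐ ω ∂μ, κY ω ∈ Θ) (hκp : ∀ᵐ ω ∂μ, κp ω ∈ Θ)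
    -- κp disintegrates Yp given m
    (hdisint : ∀ g : Ω → ℝ → ℝ,
      Measurable[m.prod (borel ℝ)] (Function.uncurry g) →
      Integrable (fun ω => g ω (Yp ω)) μ →
      μ[fun ω => g ω (Yp ω)|m] =ᵐ[μ] fun ω => ∫ y, g ω y ∂(κp ω))
    -- the conditional functionals coincide
    (hT : ∀ᵐ ω ∂μ, T (κY ω) = T (κp ω))
    (Z : Ω → ℝ) (hZ : Measurable[m] Z)
    (hint1 : Integrable (fun ω => L (T (κY ω)) (Yp ω)) μ)
    (hint2 : Integrable (fun ω => L (Z ω) (Yp ω)) μ) :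
    (∀ᵐ ω ∂μ, (μ[fun ω' => L (T (κY ω')) (Yp ω')|m]) ω ≤ (μ[fun ω' => L (Z ω') (Yp ω')|m]) ω) ∧
    ((μ[fun ω' => L (T (κY ω')) (Yp ω')|m] =ᵐ[μ] μ[fun ω' => L (Z ω') (Yp ω')|m]) ↔
      Z =ᵐ[μ] fun ω => T (κY ω)) := by
  classical
  -- the conditional functional
  set c : Ω → ℝ := fun ω => T (κY ω) with hc
  -- the expected-loss function, jointly measurable
  set κ' : @ProbabilityTheory.Kernel (Ω × ℝ) ℝ (m.prod (borel ℝ)) _ :=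
    ProbabilityTheory.Kernel.comap κp Prod.fst (@measurable_fst _ _ m (borel ℝ)) with hκ'
  haveI : ProbabilityTheory.IsMarkovKernel κ' :=
    ProbabilityTheory.Kernel.IsMarkovKernel.comap κp _
  set Be : Ω × ℝ → ℝ≥0∞ := fun p => ∫⁻ y, ENNReal.ofReal (L p.2 y) ∂(κ' p) with hBedef
  have hBemeas : Measurable[m.prod (borel ℝ)] Be := by
    refine Measurable.lintegral_kernel_prod_right (κ := κ')
      (f := fun p y => ENNReal.ofReal (L p.2 y)) ?_
    exact ENNReal.measurable_ofReal.comp (hLmeas.comp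
      (((@measurable_snd _ _ m (borel ℝ)).comp (@measurable_fst _ _ (m.prod (borel ℝ)) (borel ℝ))).prodMk
        (@measurable_snd _ _ (m.prod (borel ℝ)) (borel ℝ))))
  set B : Ω → ℝ → ℝ := fun ω x => (Be (ω, x)).toReal with hBdef
  have hBmeas : Measurable[m.prod (borel ℝ)] (fun p : Ω × ℝ => B p.1 p.2) :=
    hBemeas.ennreal_toReal
  have hBeq : ∀ ω x, B ω x = ∫ y, L x y ∂(κp ω) := by
    intro ω x
    have h1 : ∫ y, L x y ∂(κp ω)
        = ENNReal.toReal (∫⁻ y, ENNReal.ofReal (L x y) ∂(κp ω)) :=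
      integral_eq_lintegral_of_nonneg_ae (ae_of_all _ fun y => hLnonneg x y)
        (hLmeas.of_uncurry_left.aestronglyMeasurable)
    rw [h1, hBdef, hBedef]
    congr 1
  have hBnonneg : ∀ ω x, 0 ≤ B ω x := fun ω x => ENNReal.toReal_nonneg
  -- sublevel projections, to construct a measurable version of the minimal value
  have hDq : ∀ q : ℚ, MeasurableSet[m.prod (borel ℝ)] {p : Ω × ℝ | B p.1 p.2 < (q : ℝ)} := by
    intro q
    exact hBmeas measurableSet_Iio
  have hproj1 : ∀ q : ℚ, ∃ S₁ S₂ : Set Ω, MeasurableSet[m] S₁ ∧ MeasurableSet[m] S₂ ∧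
      S₁ ⊆ Prod.fst '' {p : Ω × ℝ | B p.1 p.2 < (q : ℝ)} ∧
      Prod.fst '' {p : Ω × ℝ | B p.1 p.2 < (q : ℝ)} ⊆ S₂ ∧ μ (S₂ \ S₁) = 0 :=
    fun q => exists_proj_sandwich (mΩ := mΩ) μ m hm (hDq q)
  choose S₁ S₂ hS₁ hS₂ hS₁sub hS₂sub hSnull using hproj1
  -- a measurable version of the minimal expected loss
  set mt : Ω → ℝ≥0∞ := fun ω => ⨅ q : ℚ,
    (S₁ q).piecewise (fun _ => ENNReal.ofReal q) (fun _ => ⊤) ω with hmtdef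
  have hmtmeas : Measurable[m] mt :=
    Measurable.iInf fun q => Measurable.piecewise (hS₁ q) measurable_const measurable_const
  -- the candidate graph set
  set At : Set (Ω × ℝ) := {p : Ω × ℝ | ENNReal.ofReal (B p.1 p.2) ≤ mt p.1} with hAtdef
  have hAtmeas : MeasurableSet[m.prod (borel ℝ)] At := by
    exact measurableSet_le (ENNReal.measurable_ofReal.comp hBmeas)
      (hmtmeas.comp (@measurable_fst _ _ m (borel ℝ)))
  -- cut sets
  have hDr : ∀ r : ℚ, MeasurableSet[m.prod (borel ℝ)] (At ∩ {p : Ω × ℝ | (r : ℝ) < p.2}) := by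
    intro r
    refine hAtmeas.inter ?_
    have hsnd : Measurable[m.prod (borel ℝ)] (Prod.snd : Ω × ℝ → ℝ) := measurable_snd
    exact hsnd measurableSet_Ioi
  have hproj2 : ∀ r : ℚ, ∃ U₁ U₂ : Set Ω, MeasurableSet[m] U₁ ∧ MeasurableSet[m] U₂ ∧
      U₁ ⊆ Prod.fst '' (At ∩ {p : Ω × ℝ | (r : ℝ) < p.2}) ∧
      Prod.fst '' (At ∩ {p : Ω × ℝ | (r : ℝ) < p.2}) ⊆ U₂ ∧ μ (U₂ \ U₁) = 0 :=
    fun r => exists_proj_sandwich (mΩ := mΩ) μ m hm (hDr r)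
  choose U₁ U₂ hU₁ hU₂ hU₁sub hU₂sub hUnull using hproj2
  -- the measurable a.e.-version of c
  set u : Ω → ℝ≥0∞ := fun ω => ⨆ r : ℚ,
    (U₁ r).piecewise (fun _ => ENNReal.ofReal (Real.exp r)) (fun _ => 0) ω with hudef
  have humeas : Measurable[m] u :=
    Measurable.iSup fun r => Measurable.piecewise (hU₁ r) measurable_const measurable_const
  set ct : Ω → ℝ := fun ω => Real.log (u ω).toReal with hctdef
  have hctmeas : Measurable[m] ct :=
    Real.measurable_log.comp humeas.ennreal_toReal
  -- agreement a.e.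
  have hagree1 : ∀ᵐ ω ∂μ, ∀ q : ℚ,
      (ω ∈ S₁ q ↔ ω ∈ Prod.fst '' {p : Ω × ℝ | B p.1 p.2 < (q : ℝ)}) := by
    rw [ae_all_iff]
    intro q
    have hsub : {ω | ¬(ω ∈ S₁ q ↔ ω ∈ Prod.fst '' {p : Ω × ℝ | B p.1 p.2 < (q : ℝ)})}
        ⊆ S₂ q \ S₁ q := by
      intro ω hω
      simp only [Set.mem_setOf_eq] at hω
      by_cases h1 : ω ∈ S₁ q
      · exact absurd (iff_of_true h1 (hS₁sub q h1)) hω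
      · by_cases h2 : ω ∈ Prod.fst '' {p : Ω × ℝ | B p.1 p.2 < (q : ℝ)}
        · exact ⟨hS₂sub q h2, h1⟩
        · exact absurd (iff_of_false h1 h2) hω
    exact measure_mono_null hsub (hSnull q)
  have hagree2 : ∀ᵐ ω ∂μ, ∀ r : ℚ,
      (ω ∈ U₁ r ↔ ω ∈ Prod.fst '' (At ∩ {p : Ω × ℝ | (r : ℝ) < p.2})) := by
    rw [ae_all_iff]
    intro r
    have hsub : {ω | ¬(ω ∈ U₁ r ↔ ω ∈ Prod.fst '' (At ∩ {p : Ω × ℝ | (r : ℝ) < p.2}))}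
        ⊆ U₂ r \ U₁ r := by
      intro ω hω
      simp only [Set.mem_setOf_eq] at hω
      by_cases h1 : ω ∈ U₁ r
      · exact absurd (iff_of_true h1 (hU₁sub r h1)) hω
      · by_cases h2 : ω ∈ Prod.fst '' (At ∩ {p : Ω × ℝ | (r : ℝ) < p.2})
        · exact ⟨hU₂sub r h2, h1⟩
        · exact absurd (iff_of_false h1 h2) hω
    exact measure_mono_null hsub (hUnull r)
  -- pointwise minimality and uniqueness facts on a conull set
  have hkey : ∀ᵐ ω ∂μ,
      (∀ x : ℝ, B ω (c ω) ≤ B ω x) ∧ (∀ x : ℝ, B ω (c ω) = B ω x → x = c ω) := by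
    filter_upwards [hT, hκp] with ω h1 h2
    haveI hPF : IsProbabilityMeasure (κp ω) := inferInstance
    have hceq : c ω = T (κp ω) := by simp only [hc]; exact h1
    constructor
    · intro x
      rw [hBeq, hBeq, hceq]
      exact (hconsistent (κp ω) h2 hPF x).1
    · intro x hx
      rw [hBeq, hBeq, hceq] at hx
      rw [hceq]
      exact (hconsistent (κp ω) h2 hPF x).2 hx
  -- the measurable version of the minimal value agrees a.e., and the graph sections
  have hmt_eq : ∀ᵐ ω ∂μ, mt ω = ENNReal.ofReal (B ω (c ω))
      ∧ {x : ℝ | (ω, x) ∈ At} = {c ω} := by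
    filter_upwards [hagree1, hkey] with ω hag hkeyω
    obtain ⟨hmin, huniq⟩ := hkeyω
    have hmt1 : mt ω = ENNReal.ofReal (B ω (c ω)) := by
      apply le_antisymm
      · refine le_of_forall_gt_imp_ge_of_dense fun t ht => ?_
        rcases eq_or_ne t ⊤ with rfl | htop
        · exact le_top
        · have htr : B ω (c ω) < t.toReal :=
            (ENNReal.ofReal_lt_iff_lt_toReal (hBnonneg ω (c ω)) htop).mp ht
          obtain ⟨q, hq1, hq2⟩ := exists_rat_btwn htr
          have hmem : ω ∈ S₁ q := by
            rw [hag q]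
            exact ⟨(ω, c ω), hq1, rfl⟩
          calc mt ω ≤ (S₁ q).piecewise (fun _ => ENNReal.ofReal q) (fun _ => ⊤) ω :=
                iInf_le _ q
          _ = ENNReal.ofReal q := by rw [Set.piecewise_eq_of_mem _ _ _ hmem]
          _ ≤ ENNReal.ofReal t.toReal := ENNReal.ofReal_le_ofReal hq2.le
          _ = t := ENNReal.ofReal_toReal htop
      · refine le_iInf fun q => ?_
        by_cases hmem : ω ∈ S₁ q
        · rw [Set.piecewise_eq_of_mem _ _ _ hmem]
          obtain ⟨p, hp, hpeq⟩ := (hag q).mp hmem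
          have hle : B ω (c ω) ≤ B p.1 p.2 := hpeq ▸ hmin p.2
          exact ENNReal.ofReal_le_ofReal (lt_of_le_of_lt hle hp).le
        · rw [Set.piecewise_eq_of_notMem _ _ _ hmem]
          exact le_top
    refine ⟨hmt1, ?_⟩
    ext x
    simp only [Set.mem_setOf_eq, Set.mem_singleton_iff, hAtdef]
    constructor
    · intro hx
      rw [hmt1] at hx
      have hBx : B ω x ≤ B ω (c ω) :=
        (ENNReal.ofReal_le_ofReal_iff (hBnonneg ω (c ω))).mp hx
      exact (huniq x (le_antisymm (hmin x) hBx)).symm ▸ rfl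
    · rintro rfl
      rw [hmt1]
  -- the measurable version of c agrees a.e.
  have hct : ∀ᵐ ω ∂μ, ct ω = c ω := by
    filter_upwards [hagree2, hmt_eq] with ω hag hmtω
    obtain ⟨hmt1, hsec⟩ := hmtω
    have hcut : ∀ r : ℚ, ω ∈ U₁ r ↔ (r : ℝ) < c ω := by
      intro r
      rw [hag r]
      constructor
      · rintro ⟨p, ⟨hpA, hpr⟩, hpeq⟩
        have hx : p.2 ∈ {x : ℝ | (ω, x) ∈ At} := by
          simp only [Set.mem_setOf_eq]
          rw [show ((ω : Ω), p.2) = p from Prod.ext hpeq.symm rfl]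
          exact hpA
        rw [hsec, Set.mem_singleton_iff] at hx
        rw [← hx]
        exact hpr
      · intro hr
        refine ⟨(ω, c ω), ⟨?_, hr⟩, rfl⟩
        have : c ω ∈ {x : ℝ | (ω, x) ∈ At} := by rw [hsec]; rfl
        exact this
    have hu : u ω = ENNReal.ofReal (Real.exp (c ω)) := by
      apply le_antisymm
      · refine iSup_le fun r => ?_
        by_cases hmem : ω ∈ U₁ r
        · rw [Set.piecewise_eq_of_mem _ _ _ hmem]
          exact ENNReal.ofReal_le_ofReal (Real.exp_le_exp.mpr ((hcut r).mp hmem).le)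
        · rw [Set.piecewise_eq_of_notMem _ _ _ hmem]
          exact zero_le
      · refine le_of_forall_lt fun t ht => ?_
        have htop : t ≠ ⊤ := ht.ne_top
        have htr : t.toReal < Real.exp (c ω) :=
          (ENNReal.lt_ofReal_iff_toReal_lt htop).mp ht
        set s : ℝ := max t.toReal (Real.exp (c ω - 1)) with hs
        have hs0 : 0 < s := lt_of_lt_of_le (Real.exp_pos _) (le_max_right _ _)
        have hslt : s < Real.exp (c ω) :=
          max_lt htr (Real.exp_lt_exp.mpr (by linarith))
        have hlog : Real.log s < c ω := (Real.log_lt_iff_lt_exp hs0).mpr hslt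
        obtain ⟨r, hr1, hr2⟩ := exists_rat_btwn hlog
        have hmem : ω ∈ U₁ r := (hcut r).mpr hr2
        have hterm : t < (U₁ r).piecewise (fun _ => ENNReal.ofReal (Real.exp r))
            (fun _ => 0) ω := by
          rw [Set.piecewise_eq_of_mem _ _ _ hmem]
          refine (ENNReal.lt_ofReal_iff_toReal_lt htop).mpr ?_
          calc t.toReal ≤ s := le_max_left _ _
          _ = Real.exp (Real.log s) := (Real.exp_log hs0).symm
          _ < Real.exp r := Real.exp_lt_exp.mpr hr1
        exact lt_of_lt_of_le hterm
          (le_iSup (fun r : ℚ => (U₁ r).piecewise (fun _ => ENNReal.ofReal (Real.exp r))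
            (fun _ => 0) ω) r)
    simp only [hctdef]
    rw [hu, ENNReal.toReal_ofReal (Real.exp_pos _).le, Real.log_exp]
  -- apply the disintegration identity to the measurable version and to Z
  have hfc : (fun ω => L (T (κY ω)) (Yp ω)) =ᵐ[μ] fun ω => L (ct ω) (Yp ω) := by
    filter_upwards [hct] with ω hω
    rw [hω]
  have hg1meas : Measurable[m.prod (borel ℝ)]
      (Function.uncurry fun ω y => L (ct ω) y) :=
    hLmeas.comp ((hctmeas.comp (@measurable_fst _ _ m (borel ℝ))).prodMk
      (@measurable_snd _ _ m (borel ℝ)))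
  have hg1int : Integrable (fun ω => L (ct ω) (Yp ω)) μ := hint1.congr hfc
  have hd1 := hdisint (fun ω y => L (ct ω) y) hg1meas hg1int
  have hg2meas : Measurable[m.prod (borel ℝ)]
      (Function.uncurry fun ω y => L (Z ω) y) :=
    hLmeas.comp ((hZ.comp (@measurable_fst _ _ m (borel ℝ))).prodMk
      (@measurable_snd _ _ m (borel ℝ)))
  have hd2 := hdisint (fun ω y => L (Z ω) y) hg2meas hint2
  have hcond1 : μ[fun ω' => L (T (κY ω')) (Yp ω')|m]
      =ᵐ[μ] fun ω => ∫ y, L (c ω) y ∂(κp ω) := by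
    refine (condExp_congr_ae hfc).trans (hd1.trans ?_)
    filter_upwards [hct] with ω hω
    rw [hω]
  have hcond2 : μ[fun ω' => L (Z ω') (Yp ω')|m]
      =ᵐ[μ] fun ω => ∫ y, L (Z ω) y ∂(κp ω) := hd2
  have hcomp : ∀ᵐ ω ∂μ, ∫ y, L (c ω) y ∂(κp ω) ≤ ∫ y, L (Z ω) y ∂(κp ω) := by
    filter_upwards [hkey] with ω hω
    have h := hω.1 (Z ω)
    rwa [hBeq, hBeq] at h
  constructor
  · filter_upwards [hcond1, hcond2, hcomp] with ω h1 h2 h3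
    rw [h1, h2]
    exact h3
  · constructor
    · intro heq
      have haeq : ∀ᵐ ω ∂μ, ∫ y, L (c ω) y ∂(κp ω) = ∫ y, L (Z ω) y ∂(κp ω) := by
        filter_upwards [hcond1, hcond2, heq] with ω h1 h2 h3
        rw [← h1, ← h2]
        exact h3
      filter_upwards [haeq, hkey] with ω h1 h2
      have h3 : B ω (c ω) = B ω (Z ω) := by rw [hBeq, hBeq]; exact h1
      have h4 : Z ω = c ω := h2.2 (Z ω) h3
      rw [h4]
    · intro heq
      refine condExp_congr_ae ?_
      filter_upwards [heq] with ω hω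
      rw [hω]
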